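/- arXiv:2505.09996 — 3 statements merged into one kernel-verified Lean document; each statement's English description precedes it below -/
import Mathlib

section
/- Let R be a finite commutative ring with unity, let χ be an additive character of R, let x ∈ R, and let K be the largest ideal of R contained in (x) ∩ {y ∈ R : χ(y) = 1}, where (x) is the ideal generated by x. Then φ_R(K,(x)) · C_χ(x) = μ_R(K,(x)) · |[x]|; equivalently, C_χ(x) = μ_R(K,(x)) · |[x]| / φ_R(K,(x)). -/
open scoped BigOperators
open Classical

variable {R : Type*}

/-- The left ideal of `R` generated by `x`, i.e. `(x)_ℓ`. -/
def lgen [Ring R] (x : R) : Submodule R R := Submodule.span R {x}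

/-- `[x]_ℓ = {y : (y)_ℓ = (x)_ℓ}`. -/
def classL [Ring R] (x : R) : Set R := {y | lgen y = lgen x}

/-- The character sum `C_χ(x) = ∑_{s ∈ [x]_ℓ} χ(s)`. -/
noncomputable def CchiL [Ring R] (χ : AddChar R ℂ) (x : R) : ℂ :=
  ∑ᶠ s ∈ classL x, χ s

/-- The set `M_R(J)` of maximal `R`-left ideals of `J`. -/
def maxROf [Ring R] (J : Submodule R R) : Set (Submodule R R) :=
  {M | M < J ∧ ∀ I' : Submodule R R, M < I' → ¬ I' < J}

/-- The set `M_R(J, K)` of maximal `R`-left ideals of `J` containing `K`. -/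
def maxROfAbove [Ring R] (J K : Submodule R R) : Set (Submodule R R) :=
  {M | M ∈ maxROf J ∧ K ≤ M}

/-- Intersection of the family `E` of left ideals, with the convention that the
empty intersection is `J`. -/
noncomputable def interIn [Ring R] (J : Submodule R R) (E : Set (Submodule R R)) :
    Submodule R R :=
  if E = ∅ then J else sInf E

/-- The Möbius function `μ_R(I, J)` on left ideals of `R`. -/
noncomputable def muR [Ring R] (I J : Submodule R R) : ℤ :=
  if I = J then 1
  else if I < J ∧ ∃ E : Set (Submodule R R),
      E ⊆ maxROf J ∧ E.Nonempty ∧ interIn J E = I then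
    (Nat.card {E : Set (Submodule R R) //
        E ⊆ maxROf J ∧ interIn J E = I ∧ Even (Nat.card E)} : ℤ)
      - (Nat.card {E : Set (Submodule R R) //
        E ⊆ maxROf J ∧ interIn J E = I ∧ Odd (Nat.card E)} : ℤ)
  else 0

/-- The function `φ_R(I, J)` on left ideals of `R`. -/
noncomputable def phiR [Ring R] (I J : Submodule R R) : ℂ :=
  if I = J then 1
  else if I < J ∧ ∃ E : Set (Submodule R R),
      E ⊆ maxROf J ∧ E.Nonempty ∧ interIn J E = I then
    ∏ᶠ M ∈ maxROfAbove J I, ((Nat.card J : ℂ) / (Nat.card M : ℂ) - 1)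
  else 1

/-!
Write `J = (x)` and let `P` be the finite set of maximal submodules `M ⋖ J`. The elements of
`[x]` are the elements of `J` lying in no `M ∈ P`, so inclusion–exclusion expresses `C_χ(x)` as
`∑_{t ⊆ P} (-1)^|t| ∑_{s ∈ I_t} χ(s)`, where `I_t = J ∩ ⋂ t`. The inner sum is `|I_t|` if
`I_t ≤ K` and `0` otherwise.

Because `J` is cyclic, `J ≤ A ⊔ B` (for `A ≤ J`) holds exactly when the colon ideals `A : J` and
`B : J` are coprime. Coprimality survives finite intersections, so the relations `M ⊔ N = J`
(for distinct covers, or for `K ⊄ M`) do as well, as in the Chinese remainder theorem. This gives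
`|I_t| = |J| ∏_{M ∈ t} |M|/|J|` and `I_t ≤ I_e ↔ e ⊆ t`. It also shows that if `K ≤ J` contains
some `I_t`, then `K = I_e` for `e` the set of covers containing `K`. Both `C_χ(x)` and `|[x]|`
then factor as products over `P`, and their ratio is `(-1)^|e| / ∏_{M ∈ e} (|J|/|M| - 1) = μ/φ`.
If `K` contains no `I_t`, every term vanishes and `μ = 0`, `φ = 1`.
-/

open Finset

section Order
variable {α : Type*} [Lattice α] {J M M' N : α}

lemma CovBy.sup_eq_of_not_le (h : M ⋖ J) (hN : N ≤ J) (hNM : ¬N ≤ M) : N ⊔ M = J :=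
  (h.eq_or_eq le_sup_right (sup_le hN h.le)).resolve_left fun h' => hNM (h' ▸ le_sup_left)

lemma CovBy.eq_of_le_of_covBy (hM : M ⋖ J) (hM' : M' ⋖ J) (h : M ≤ M') : M = M' :=
  ((hM.eq_or_eq h hM'.le).resolve_right hM'.ne).symm

end Order

lemma natCard_subtype_eq_ite {α : Type*} {p : α → Prop} {a : α} {q : Prop}
    (h : ∀ b, p b ↔ b = a ∧ q) : Nat.card {b // p b} = if q then 1 else 0 := by
  split_ifs with hq <;> simp [h, hq]

lemma sum_powerset_neg_one_pow_mul_ite_subset {S ι : Type*} [CommRing S] [DecidableEq ι]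
    {e P : Finset ι} (he : e ⊆ P) (r : ι → S) :
    ∑ t ∈ P.powerset, (-1) ^ #t * (if e ⊆ t then ∏ i ∈ t, r i else 0) =
      ∏ i ∈ P, ((if i ∈ e then 0 else 1) - r i) := by
  have hsplit : ∀ i, (if i ∈ e then 0 else 1) - r i = -r i + if i ∉ e then 1 else 0 := by
    intro i
    split_ifs <;> ring
  simp_rw [hsplit, prod_add, prod_neg, prod_boole]
  refine sum_congr rfl fun t _ => ?_
  have hiff : (∀ i ∈ P \ t, i ∉ e) ↔ e ⊆ t :=
    ⟨fun h i hi => by_contra fun hit => h i (mem_sdiff.2 ⟨he hi, hit⟩) hi,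
      fun h i hi hie => (mem_sdiff.1 hi).2 (h hie)⟩
  simp only [hiff]
  split_ifs <;> ring

lemma prod_div_sub_one_mul_prod_ite_sub {F ι : Type*} [Field F] [DecidableEq ι]
    {e P : Finset ι} (he : e ⊆ P) {c : F} (hc : c ≠ 0) (a : ι → F) (ha : ∀ i ∈ e, a i ≠ 0) :
    (∏ i ∈ e, (c / a i - 1)) * ∏ i ∈ P, ((if i ∈ e then 0 else 1) - a i / c) =
      (-1) ^ #e * ∏ i ∈ P, (1 - a i / c) := by
  calc _ = ∏ i ∈ P,
          ((if i ∈ e then c / a i - 1 else 1) * ((if i ∈ e then 0 else 1) - a i / c)) := by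
        rw [prod_mul_distrib, prod_ite_mem, inter_eq_right.2 he]
    _ = ∏ i ∈ P, ((if i ∈ e then -1 else 1) * (1 - a i / c)) := prod_congr rfl fun i _ => by
        split_ifs with hi
        · field_simp [ha i hi]
          ring
        · ring
    _ = _ := by rw [prod_mul_distrib, prod_ite_mem, inter_eq_right.2 he, prod_const]

lemma sum_filter_mem_addChar {A S : Type*} [AddGroup A] [Fintype A] [CommRing S] [IsDomain S]
    (ψ : AddChar A S) (N : AddSubgroup A) :
    ∑ a ∈ univ.filter (· ∈ N), ψ a = if ∀ a ∈ N, ψ a = 1 then (Nat.card N : S) else 0 := by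
  have h := AddChar.sum_eq_ite (ψ.compAddMonoidHom N.subtype)
  simp only [AddChar.compAddMonoidHom_apply, AddSubgroup.coe_subtype, AddChar.eq_zero_iff,
    Subtype.forall, ← Nat.card_eq_fintype_card] at h
  rw [sum_subtype _ (p := (· ∈ N)) (by simp), h]

lemma card_inf_mul_card_sup {S M : Type*} [Ring S] [AddCommGroup M] [Module S M]
    (A B : Submodule S M) : Nat.card ↥(A ⊓ B) * Nat.card ↥(A ⊔ B) = Nat.card ↥A * Nat.card ↥B := by
  have h1 := Submodule.card_eq_card_quotient_mul_card
    (Submodule.comap A.subtype A ⊓ Submodule.comap A.subtype B)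
  have h2 := Submodule.card_eq_card_quotient_mul_card (Submodule.comap (A ⊔ B).subtype B)
  rw [Nat.card_congr (LinearMap.quotientInfEquivSupQuotient A B).toEquiv, ← Submodule.comap_inf,
    Nat.card_congr (Submodule.comapSubtypeEquivOfLe inf_le_left).toEquiv] at h1
  rw [Nat.card_congr (Submodule.comapSubtypeEquivOfLe le_sup_right).toEquiv] at h2
  rw [h1, h2]
  ring

section Ring
variable [Ring R]

lemma lgen_le_iff {x : R} {N : Submodule R R} : lgen x ≤ N ↔ x ∈ N :=
  Submodule.span_singleton_le_iff_mem _ _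

lemma mem_classL_iff [IsNoetherianRing R] {x s : R} :
    s ∈ classL x ↔ s ∈ lgen x ∧ ∀ M : Submodule R R, M ⋖ lgen x → s ∉ M := by
  refine ⟨fun h => ⟨h ▸ Submodule.mem_span_singleton_self s, fun M hM hsM => ?_⟩,
    fun ⟨hs, h⟩ => ?_⟩
  · exact hM.lt.not_ge (h ▸ lgen_le_iff.2 hsM)
  · by_contra hne
    obtain ⟨M, hsM, hM⟩ := exists_le_covBy_of_lt ((lgen_le_iff.2 hs).lt_of_ne hne)
    exact h M hM (lgen_le_iff.1 hsM)

def coverMeet (J : Submodule R R) (t : Finset (Submodule R R)) : Submodule R R :=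
  J ⊓ t.inf id

variable {J M : Submodule R R} {s t : Finset (Submodule R R)}

lemma coverMeet_le : coverMeet J t ≤ J := inf_le_left

lemma coverMeet_le_of_mem (h : M ∈ t) : coverMeet J t ≤ M :=
  inf_le_right.trans (Finset.inf_le h)

lemma coverMeet_lt_of_mem (hM : M ∈ t) (h : M < J) : coverMeet J t < J :=
  (coverMeet_le_of_mem hM).trans_lt h

lemma coverMeet_anti (h : s ⊆ t) : coverMeet J t ≤ coverMeet J s :=
  inf_le_inf_left _ (Finset.inf_mono h)

@[simp] lemma coverMeet_empty : coverMeet J ∅ = J := by simp [coverMeet]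

lemma coverMeet_insert : coverMeet J (insert M t) = M ⊓ coverMeet J t := by
  simp only [coverMeet, inf_insert, id, inf_left_comm]

lemma coverMeet_union : coverMeet J (s ∪ t) = coverMeet J s ⊓ coverMeet J t := by
  rw [coverMeet, coverMeet, coverMeet, inf_union, inf_inf_distrib_left]

lemma interIn_coe_eq_coverMeet (ht : ∀ M ∈ t, M ≤ J) : interIn J ↑t = coverMeet J t := by
  rw [interIn]
  split_ifs with h
  · simp [Finset.coe_eq_empty.1 h]
  · obtain ⟨M, hM⟩ := Finset.nonempty_iff_ne_empty.2 (by simpa using h)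
    rw [← Finset.inf_id_eq_sInf, coverMeet, inf_eq_right.2 ((Finset.inf_le hM).trans (ht M hM))]

end Ring

section Cyclic
variable [CommRing R] {x : R} {s t : Finset (Submodule R R)} {K M : Submodule R R}

lemma mem_colon_lgen_iff {N : Submodule R R} {r : R} : r ∈ N.colon (lgen x) ↔ r * x ∈ N := by
  refine ⟨fun h => Submodule.mem_colon.1 h x (Submodule.mem_span_singleton_self x), fun h => ?_⟩
  refine Submodule.mem_colon.2 fun s hs => ?_
  obtain ⟨a, rfl⟩ := Ideal.mem_span_singleton'.1 hs
  simpa [smul_eq_mul, mul_left_comm] using N.smul_mem a h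

lemma isCoprime_colon_lgen_iff {A B : Submodule R R} (hA : A ≤ lgen x) :
    IsCoprime (A.colon (lgen x)) (B.colon (lgen x)) ↔ lgen x ≤ A ⊔ B := by
  rw [Ideal.isCoprime_iff_exists, lgen_le_iff]
  constructor
  · rintro ⟨u, hu, v, hv, huv⟩
    rw [mem_colon_lgen_iff] at hu hv
    exact Submodule.mem_sup.2 ⟨_, hu, _, hv, by rw [← add_mul, huv, one_mul]⟩
  · intro h
    obtain ⟨a, ha, b, hb, hab⟩ := Submodule.mem_sup.1 h
    obtain ⟨r, hr⟩ : ∃ r, r * x = a := Submodule.mem_span_singleton.1 (hA ha)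
    refine ⟨r, mem_colon_lgen_iff.2 (hr ▸ ha), 1 - r, mem_colon_lgen_iff.2 ?_, add_sub_cancel _ _⟩
    rwa [sub_mul, one_mul, hr, ← hab, add_sub_cancel_left]

lemma lgen_le_sup_coverMeet {A : Submodule R R} (hA : A ≤ lgen x)
    (ht : ∀ M ∈ t, lgen x ≤ A ⊔ M) : lgen x ≤ A ⊔ coverMeet (lgen x) t := by
  have hcolon : (coverMeet (lgen x) t).colon (lgen x) = ⨅ M ∈ t, M.colon (lgen x) := by
    simp [coverMeet, Finset.inf_eq_iInf, (Submodule.colon_eq_top_iff_subset _).2 subset_rfl]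
  rw [← isCoprime_colon_lgen_iff hA, hcolon]
  exact Ideal.isCoprime_biInf fun M hM => (isCoprime_colon_lgen_iff hA).2 (ht M hM)

lemma lgen_le_sup_coverMeet_of_covBy (hM : M ⋖ lgen x) (ht : ∀ M' ∈ t, M' ⋖ lgen x)
    (hMt : M ∉ t) : lgen x ≤ M ⊔ coverMeet (lgen x) t :=
  lgen_le_sup_coverMeet hM.le fun M' hM' =>
    ((ht M' hM').sup_eq_of_not_le hM.le fun h => hMt (hM.eq_of_le_of_covBy (ht M' hM') h ▸ hM')).ge

lemma coverMeet_le_coverMeet_iff (hs : ∀ M ∈ s, M ⋖ lgen x) (ht : ∀ M ∈ t, M ⋖ lgen x) :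
    coverMeet (lgen x) t ≤ coverMeet (lgen x) s ↔ s ⊆ t := by
  refine ⟨fun h M hMs => ?_, coverMeet_anti⟩
  by_contra hMt
  have hJ := lgen_le_sup_coverMeet_of_covBy (hs M hMs) ht hMt
  exact (hs M hMs).lt.not_ge (hJ.trans (sup_le le_rfl (h.trans (coverMeet_le_of_mem hMs))))

lemma coverMeet_inj (hs : ∀ M ∈ s, M ⋖ lgen x) (ht : ∀ M ∈ t, M ⋖ lgen x) :
    coverMeet (lgen x) s = coverMeet (lgen x) t ↔ s = t :=
  ⟨fun h => ((coverMeet_le_coverMeet_iff hs ht).1 h.ge).antisymm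
    ((coverMeet_le_coverMeet_iff ht hs).1 h.le), congrArg _⟩

lemma eq_coverMeet_filter (hK : K ≤ lgen x) (ht : ∀ M ∈ t, M ⋖ lgen x)
    (htK : coverMeet (lgen x) t ≤ K) : K = coverMeet (lgen x) (t.filter (K ≤ ·)) := by
  set e := t.filter (K ≤ ·)
  set s := t.filter (¬K ≤ ·)
  have hKe : K ≤ coverMeet (lgen x) e := le_inf hK (Finset.le_inf fun M hM => (mem_filter.1 hM).2)
  have hJ : lgen x ≤ K ⊔ coverMeet (lgen x) s := lgen_le_sup_coverMeet hK fun M hM =>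
    ((ht M (mem_filter.1 hM).1).sup_eq_of_not_le hK (mem_filter.1 hM).2).ge
  refine hKe.antisymm ?_
  calc coverMeet (lgen x) e ≤ (K ⊔ coverMeet (lgen x) s) ⊓ coverMeet (lgen x) e :=
        le_inf (coverMeet_le.trans hJ) le_rfl
    _ = K ⊔ coverMeet (lgen x) s ⊓ coverMeet (lgen x) e := sup_inf_assoc_of_le _ hKe
    _ = K := by rw [← coverMeet_union, union_comm, filter_union_filter_not_eq, sup_eq_left.2 htK]

end Cyclic

section FiniteRing
variable [CommRing R] [Finite R] {x : R} {e : Finset (Submodule R R)}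

noncomputable def lowerCovers (J : Submodule R R) : Finset (Submodule R R) :=
  (Set.toFinite {M | M ⋖ J}).toFinset

lemma mem_lowerCovers {J M : Submodule R R} : M ∈ lowerCovers J ↔ M ⋖ J :=
  Set.Finite.mem_toFinset _

lemma natCast_card_submodule_ne_zero (N : Submodule R R) : (Nat.card N : ℂ) ≠ 0 :=
  Nat.cast_ne_zero.2 Nat.card_pos.ne'

lemma natCard_lt_natCard_of_lt {M N : Submodule R R} (h : M < N) : Nat.card M < Nat.card N := by
  simp only [← SetLike.coe_sort_coe, Nat.card_coe_set_eq]
  exact Set.ncard_lt_ncard (SetLike.coe_ssubset_coe.2 h)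

lemma card_coverMeet {t : Finset (Submodule R R)} (ht : ∀ M ∈ t, M ⋖ lgen x) :
    (Nat.card (coverMeet (lgen x) t) : ℂ) =
      Nat.card (lgen x) * ∏ M ∈ t, (Nat.card M / Nat.card (lgen x) : ℂ) := by
  induction t using Finset.induction_on with
  | empty => simp
  | insert M t hMt ih =>
    have hM := ht M (mem_insert_self M t)
    have ht' : ∀ M' ∈ t, M' ⋖ lgen x := fun M' h => ht M' (mem_insert_of_mem h)
    have hsup : M ⊔ coverMeet (lgen x) t = lgen x :=
      (sup_le hM.le coverMeet_le).antisymm (lgen_le_sup_coverMeet_of_covBy hM ht' hMt)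
    have hcard := card_inf_mul_card_sup M (coverMeet (lgen x) t)
    rw [hsup] at hcard
    rw [coverMeet_insert, prod_insert hMt, mul_left_comm, ← ih ht', div_mul_eq_mul_div,
      eq_div_iff (natCast_card_submodule_ne_zero _)]
    exact_mod_cast hcard

lemma sum_powerset_card_coverMeet (he : e ⊆ lowerCovers (lgen x)) :
    ∑ t ∈ (lowerCovers (lgen x)).powerset, (-1 : ℂ) ^ #t *
      (if coverMeet (lgen x) t ≤ coverMeet (lgen x) e then (Nat.card (coverMeet (lgen x) t) : ℂ)
        else 0) =
      Nat.card (lgen x) * ∏ M ∈ lowerCovers (lgen x),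
        ((if M ∈ e then 0 else 1) - (Nat.card M / Nat.card (lgen x) : ℂ)) := by
  rw [← sum_powerset_neg_one_pow_mul_ite_subset he fun M => (Nat.card M / Nat.card (lgen x) : ℂ),
    mul_sum]
  refine sum_congr rfl fun t ht => ?_
  have hcov : ∀ M ∈ t, M ⋖ lgen x := fun M hM => mem_lowerCovers.1 (mem_powerset.1 ht hM)
  rw [coverMeet_le_coverMeet_iff (fun M hM => mem_lowerCovers.1 (he hM)) hcov, card_coverMeet hcov]
  split_ifs <;> ring

lemma exists_finset_eq_of_subset_maxROf {J : Submodule R R} {E : Set (Submodule R R)}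
    (hE : E ⊆ maxROf J) : ∃ t ⊆ lowerCovers J, ↑t = E :=
  ⟨(Set.toFinite E).toFinset, fun _ hM => mem_lowerCovers.2 (hE ((Set.Finite.mem_toFinset _).1 hM)),
    Set.Finite.coe_toFinset _⟩

lemma lt_and_exists_interIn_eq_iff {I J : Submodule R R} :
    (I < J ∧ ∃ E : Set (Submodule R R), E ⊆ maxROf J ∧ E.Nonempty ∧ interIn J E = I) ↔
      ∃ t ⊆ lowerCovers J, t.Nonempty ∧ coverMeet J t = I := by
  constructor
  · rintro ⟨-, E, hE, hne, rfl⟩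
    obtain ⟨t, htP, rfl⟩ := exists_finset_eq_of_subset_maxROf hE
    exact ⟨t, htP, coe_nonempty.1 hne,
      (interIn_coe_eq_coverMeet fun M hM => (mem_lowerCovers.1 (htP hM)).le).symm⟩
  · rintro ⟨t, htP, ⟨M, hM⟩, rfl⟩
    have hcov : ∀ M ∈ t, M ⋖ J := fun M hM => mem_lowerCovers.1 (htP hM)
    exact ⟨coverMeet_lt_of_mem hM (hcov M hM).lt, ↑t, hcov, coe_nonempty.2 ⟨M, hM⟩,
      interIn_coe_eq_coverMeet fun M hM => (hcov M hM).le⟩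

lemma muR_eq_zero_of_forall_ne {I J : Submodule R R}
    (h : ∀ t ⊆ lowerCovers J, coverMeet J t ≠ I) : muR I J = 0 := by
  rw [muR, if_neg fun hIJ => h ∅ (empty_subset _) (by simp [hIJ]), if_neg fun hc => ?_]
  obtain ⟨t, ht, -, hI⟩ := lt_and_exists_interIn_eq_iff.1 hc
  exact h t ht hI

lemma phiR_eq_one_of_forall_ne {I J : Submodule R R}
    (h : ∀ t ⊆ lowerCovers J, coverMeet J t ≠ I) : phiR I J = 1 := by
  rw [phiR, if_neg fun hIJ => h ∅ (empty_subset _) (by simp [hIJ]), if_neg fun hc => ?_]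
  obtain ⟨t, ht, -, hI⟩ := lt_and_exists_interIn_eq_iff.1 hc
  exact h t ht hI

lemma muR_coverMeet (he : e ⊆ lowerCovers (lgen x)) :
    muR (coverMeet (lgen x) e) (lgen x) = (-1) ^ #e := by
  have hcov : ∀ M ∈ e, M ⋖ lgen x := fun M hM => mem_lowerCovers.1 (he hM)
  rcases e.eq_empty_or_nonempty with rfl | ⟨M, hM⟩
  · simp [muR]
  have hE : ∀ E, E ⊆ maxROf (lgen x) ∧ interIn (lgen x) E = coverMeet (lgen x) e ↔ E = ↑e := by
    refine fun E => ⟨fun ⟨hE, hI⟩ => ?_, ?_⟩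
    · obtain ⟨t, htP, rfl⟩ := exists_finset_eq_of_subset_maxROf hE
      have htcov : ∀ M ∈ t, M ⋖ lgen x := fun M hM => mem_lowerCovers.1 (htP hM)
      rw [interIn_coe_eq_coverMeet fun M hM => (htcov M hM).le, coverMeet_inj htcov hcov] at hI
      rw [hI]
    · rintro rfl
      exact ⟨hcov, interIn_coe_eq_coverMeet fun M hM => (hcov M hM).le⟩
  have hparity : ∀ (q : ℕ → Prop) E, (E ⊆ maxROf (lgen x) ∧
      interIn (lgen x) E = coverMeet (lgen x) e ∧ q (Nat.card E)) ↔ E = ↑e ∧ q #e := by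
    intro q E
    rw [← and_assoc, hE]
    constructor <;> rintro ⟨rfl, h⟩ <;> simpa using h
  rw [muR, if_neg (coverMeet_lt_of_mem hM (hcov M hM).lt).ne,
    if_pos (lt_and_exists_interIn_eq_iff.2 ⟨e, he, ⟨M, hM⟩, rfl⟩),
    natCard_subtype_eq_ite (hparity Even), natCard_subtype_eq_ite (hparity Odd)]
  rcases Nat.even_or_odd #e with h | h <;> simp [h, h.neg_one_pow]

lemma maxROfAbove_coverMeet (he : e ⊆ lowerCovers (lgen x)) :
    maxROfAbove (lgen x) (coverMeet (lgen x) e) = ↑e := by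
  have hcov : ∀ M ∈ e, M ⋖ lgen x := fun M hM => mem_lowerCovers.1 (he hM)
  ext M
  refine ⟨fun ⟨(hM : M ⋖ lgen x), hle⟩ => ?_, fun hM => ⟨hcov M hM, coverMeet_le_of_mem hM⟩⟩
  have hsingle : coverMeet (lgen x) {M} = M := by simpa [coverMeet] using hM.le
  rw [← hsingle, coverMeet_le_coverMeet_iff (by simpa using hM) hcov] at hle
  exact singleton_subset_iff.1 hle

lemma phiR_coverMeet (he : e ⊆ lowerCovers (lgen x)) :
    phiR (coverMeet (lgen x) e) (lgen x) =
      ∏ M ∈ e, ((Nat.card (lgen x) : ℂ) / Nat.card M - 1) := by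
  rcases e.eq_empty_or_nonempty with rfl | ⟨M, hM⟩
  · simp [phiR]
  have hcov : M ⋖ lgen x := mem_lowerCovers.1 (he hM)
  rw [phiR, if_neg (coverMeet_lt_of_mem hM hcov.lt).ne,
    if_pos (lt_and_exists_interIn_eq_iff.2 ⟨e, he, ⟨M, hM⟩, rfl⟩), maxROfAbove_coverMeet he,
    finprod_mem_coe_finset]

lemma phiR_coverMeet_ne_zero (he : e ⊆ lowerCovers (lgen x)) :
    phiR (coverMeet (lgen x) e) (lgen x) ≠ 0 := by
  rw [phiR_coverMeet he, prod_ne_zero_iff]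
  intro M hM
  rw [sub_ne_zero, Ne, div_eq_one_iff_eq (natCast_card_submodule_ne_zero M), Nat.cast_inj]
  exact (natCard_lt_natCard_of_lt (mem_lowerCovers.1 (he hM)).lt).ne'

end FiniteRing

section CharacterSum
variable [CommRing R] [Fintype R] {x : R}

lemma finsum_classL_eq_sum_powerset {G : Type*} [AddCommGroup G] (f : R → G) :
    ∑ᶠ s ∈ classL x, f s = ∑ t ∈ (lowerCovers (lgen x)).powerset,
      (-1 : ℤ) ^ #t • ∑ s ∈ univ.filter (· ∈ coverMeet (lgen x) t), f s := by
  have hIE := inclusion_exclusion_sum_inf_compl (lowerCovers (lgen x))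
    (fun M => univ.filter (· ∈ M)) (fun s => if s ∈ lgen x then f s else 0)
  rw [finsum_mem_eq_toFinset_sum]
  convert hIE using 1
  · rw [← sum_filter]
    congr 1
    ext s
    simp [mem_classL_iff, mem_lowerCovers, mem_inf, and_comm]
  · refine sum_congr rfl fun t _ => ?_
    rw [← sum_filter]
    congr 2
    ext s
    simp [coverMeet, Submodule.mem_finsetInf, mem_inf, and_comm]

lemma charSum_eq_sum_powerset (χ : AddChar R ℂ) (x : R) :
    CchiL χ x = ∑ t ∈ (lowerCovers (lgen x)).powerset, (-1 : ℂ) ^ #t *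
      if ∀ s ∈ coverMeet (lgen x) t, χ s = 1 then (Nat.card (coverMeet (lgen x) t) : ℂ)
      else 0 := by
  simp only [CchiL, finsum_classL_eq_sum_powerset, zsmul_eq_mul, Int.cast_pow, Int.cast_neg,
    Int.cast_one]
  exact sum_congr rfl fun t _ => congrArg _ (sum_filter_mem_addChar χ (coverMeet _ t).toAddSubgroup)

lemma natCard_classL_eq_prod (x : R) :
    (Nat.card (classL x) : ℂ) = Nat.card (lgen x) *
      ∏ M ∈ lowerCovers (lgen x), (1 - (Nat.card M / Nat.card (lgen x) : ℂ)) := by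
  have h := finsum_classL_eq_sum_powerset (x := x) fun _ => (1 : ℂ)
  simp only [finsum_mem_eq_toFinset_sum, sum_const, nsmul_eq_mul, mul_one, zsmul_eq_mul] at h
  rw [Nat.card_eq_fintype_card, ← Set.toFinset_card, h]
  push_cast
  simpa [coverMeet_le, Nat.card_eq_fintype_card, Fintype.card_subtype] using
    sum_powerset_card_coverMeet (x := x) (empty_subset _)

end CharacterSum

theorem stmt2 [CommRing R] [Fintype R] (χ : AddChar R ℂ) (x : R) (K : Submodule R R)
    (hK : (K : Set R) ⊆ (lgen x : Set R) ∩ {y | χ y = 1})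
    (hKmax : ∀ L : Submodule R R,
      (L : Set R) ⊆ (lgen x : Set R) ∩ {y | χ y = 1} → L ≤ K) :
    phiR K (lgen x) * CchiL χ x = (muR K (lgen x) : ℂ) * (Nat.card (classL x) : ℂ) ∧
    CchiL χ x = (muR K (lgen x) : ℂ) * (Nat.card (classL x) : ℂ) / phiR K (lgen x) := by
  have hKJ : K ≤ lgen x := fun s hs => (hK hs).1
  have hχ : ∀ t, (∀ s ∈ coverMeet (lgen x) t, χ s = 1) ↔ coverMeet (lgen x) t ≤ K := fun t =>
    ⟨fun h => hKmax _ fun s hs => ⟨coverMeet_le hs, h s hs⟩, fun h s hs => (hK (h hs)).2⟩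
  have hC := charSum_eq_sum_powerset χ x
  simp only [hχ] at hC
  by_cases h : ∃ t ⊆ lowerCovers (lgen x), coverMeet (lgen x) t ≤ K
  · obtain ⟨t, htP, htK⟩ := h
    obtain ⟨e, he, rfl⟩ : ∃ e ⊆ lowerCovers (lgen x), K = coverMeet (lgen x) e :=
      ⟨_, (filter_subset _ _).trans htP,
        eq_coverMeet_filter hKJ (fun M hM => mem_lowerCovers.1 (htP hM)) htK⟩
    have hmain : phiR (coverMeet (lgen x) e) (lgen x) * CchiL χ x =
        muR (coverMeet (lgen x) e) (lgen x) * Nat.card (classL x) := by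
      rw [hC, sum_powerset_card_coverMeet he, natCard_classL_eq_prod, phiR_coverMeet he,
        muR_coverMeet he]
      push_cast
      linear_combination (Nat.card (lgen x) : ℂ) * prod_div_sub_one_mul_prod_ite_sub he
        (natCast_card_submodule_ne_zero (lgen x)) (fun M => (Nat.card M : ℂ))
        fun M _ => natCast_card_submodule_ne_zero M
    exact ⟨hmain, eq_div_of_mul_eq (phiR_coverMeet_ne_zero he) ((mul_comm _ _).trans hmain)⟩
  · push Not at h
    have hC0 : CchiL χ x = 0 :=
      hC.trans (sum_eq_zero fun t ht => by rw [if_neg (h t (mem_powerset.1 ht)), mul_zero])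
    have hne : ∀ t ⊆ lowerCovers (lgen x), coverMeet (lgen x) t ≠ K := fun t ht hK => h t ht hK.le
    simp [muR_eq_zero_of_forall_ne hne, phiR_eq_one_of_forall_ne hne, hC0]
end

section
/- Let R be a finite ring with unity and let K ⊆ J be left ideals of R. Then Σ_{I a left ideal of R with K ⊆ I ⊆ J} μ_R(I,J) equals 1 if K = J, and equals 0 if K ⊊ J. -/
open scoped BigOperators
open Classical

variable {R : Type*}

/-! Expanding `μ_R(I, J)` as the signed count `∑ (-1)^|E|` over the families `E ⊆ M_R(J)` with
`⋂ E = I` turns the sum over `K ⊆ I ⊆ J` into the signed count of all families of maximal left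
ideals of `J` that contain `K`, i.e. the alternating sum over the subsets of `M_R(J, K)`. That is
`1` if `M_R(J, K)` is empty and `0` otherwise, and `M_R(J, K)` is empty exactly when `K = J`,
since for `K ⊊ J` a maximal element of `{I | K ⊆ I ⊊ J}` exists by finiteness. -/

open Finset

section MaximalSubideals

variable [Ring R] {J K : Submodule R R} {E : Set (Submodule R R)}

lemma interIn_empty (J : Submodule R R) : interIn J ∅ = J :=
  if_pos rfl

lemma interIn_of_nonempty (hE : E.Nonempty) : interIn J E = sInf E :=
  if_neg hE.ne_empty

lemma le_interIn_iff (hKJ : K ≤ J) : K ≤ interIn J E ↔ ∀ M ∈ E, K ≤ M := by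
  rcases E.eq_empty_or_nonempty with rfl | hE
  · simp [interIn_empty, hKJ]
  · rw [interIn_of_nonempty hE, le_sInf_iff]

lemma interIn_lt (hE : E ⊆ maxROf J) (hne : E.Nonempty) : interIn J E < J := by
  obtain ⟨M, hM⟩ := hne
  rw [interIn_of_nonempty ⟨M, hM⟩]
  exact (sInf_le hM).trans_lt (hE hM).1

lemma interIn_le (hE : E ⊆ maxROf J) : interIn J E ≤ J := by
  rcases E.eq_empty_or_nonempty with rfl | hne
  · exact (interIn_empty J).le
  · exact (interIn_lt hE hne).le

lemma interIn_eq_self_iff (hE : E ⊆ maxROf J) : interIn J E = J ↔ E = ∅ := by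
  refine ⟨fun h => E.not_nonempty_iff_eq_empty.mp fun hne => (interIn_lt hE hne).ne h, ?_⟩
  rintro rfl
  exact interIn_empty J

lemma subset_maxROfAbove_iff (hKJ : K ≤ J) :
    E ⊆ maxROfAbove J K ↔ E ⊆ maxROf J ∧ K ≤ interIn J E := by
  rw [le_interIn_iff hKJ]
  exact ⟨fun h => ⟨fun M hM => (h hM).1, fun M hM => (h hM).2⟩,
    fun h M hM => ⟨h.1 hM, h.2 M hM⟩⟩

lemma maxROfAbove_self (J : Submodule R R) : maxROfAbove J J = ∅ :=
  Set.eq_empty_of_forall_notMem fun _ hM => hM.1.1.not_ge hM.2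

lemma maxROfAbove_nonempty [WellFoundedGT (Submodule R R)] (h : K < J) :
    (maxROfAbove J K).Nonempty := by
  obtain ⟨M, hKM, hMJ, hmax⟩ := exists_maximal_ge_of_wellFoundedGT (· < J) K h
  exact ⟨M, ⟨hMJ, fun I hMI hIJ => (hmax hIJ hMI.le).not_gt hMI⟩, hKM⟩

end MaximalSubideals

lemma Finset.sum_neg_one_pow_eq_card_even_sub_card_odd {α : Type*} (s : Finset α) (f : α → ℕ) :
    ∑ x ∈ s, (-1 : ℤ) ^ f x = #{x ∈ s | Even (f x)} - #{x ∈ s | Odd (f x)} := by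
  rw [← sum_filter_add_sum_filter_not s (fun x => Even (f x)),
    sum_congr rfl fun x hx => (mem_filter.1 hx).2.neg_one_pow,
    sum_congr rfl fun x hx => (Nat.not_even_iff_odd.1 (mem_filter.1 hx).2).neg_one_pow]
  simp only [sum_const, Nat.not_even_iff_odd]
  ring

lemma sum_subset_neg_one_pow_card {α : Type*} [Fintype α] (S : Set α) :
    ∑ E : Set α with E ⊆ S, (-1 : ℤ) ^ Nat.card E = if S = ∅ then 1 else 0 := by
  calc ∑ E : Set α with E ⊆ S, (-1 : ℤ) ^ Nat.card E
      = ∑ m ∈ S.toFinset.powerset, (-1 : ℤ) ^ #m := by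
        refine sum_nbij' (fun E => E.toFinset) (↑) ?_ ?_ ?_ ?_ ?_ <;> intro E hE <;> simp_all
    _ = if S = ∅ then 1 else 0 := by
        rw [sum_powerset_neg_one_pow_card]
        simp

section MobiusSum

variable [Ring R] [Fintype (Submodule R R)]

lemma muR_eq_sum_neg_one_pow (I J : Submodule R R) :
    muR I J = ∑ E with E ⊆ maxROf J ∧ interIn J E = I, (-1 : ℤ) ^ Nat.card E := by
  by_cases hIJ : I = J
  · subst hIJ
    have hfib : ({E | E ⊆ maxROf I ∧ interIn I E = I} : Finset (Set (Submodule R R))) = {∅} := by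
      ext E
      simp only [mem_filter, mem_univ, true_and, mem_singleton]
      exact ⟨fun h => (interIn_eq_self_iff h.1).1 h.2,
        by rintro rfl; exact ⟨Set.empty_subset _, interIn_empty I⟩⟩
    simp [muR, hfib]
  rw [muR, if_neg hIJ]
  split_ifs with h
  · simp only [sum_neg_one_pow_eq_card_even_sub_card_odd, Nat.card_eq_fintype_card,
      Fintype.card_subtype, filter_filter, and_assoc]
  · refine (sum_eq_zero fun E hE => ?_).symm
    obtain ⟨hsub, rfl⟩ := (mem_filter.1 hE).2
    have hne : E.Nonempty :=
      Set.nonempty_iff_ne_empty.2 fun h => hIJ ((interIn_eq_self_iff hsub).2 h)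
    exact absurd ⟨interIn_lt hsub hne, E, hsub, hne, rfl⟩ h

lemma sum_muR_of_le {K J : Submodule R R} (hKJ : K ≤ J) :
    ∑ I with K ≤ I ∧ I ≤ J, muR I J = if maxROfAbove J K = ∅ then 1 else 0 := by
  rw [sum_congr rfl fun I _ => muR_eq_sum_neg_one_pow I J, ← sum_subset_neg_one_pow_card,
    sum_comm' (t' := {E | E ⊆ maxROfAbove J K}) (s' := fun E => {interIn J E})]
  · simp only [sum_singleton]
  · intro I E
    simp only [mem_filter, mem_univ, true_and, mem_singleton, subset_maxROfAbove_iff hKJ]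
    constructor
    · rintro ⟨⟨hKI, -⟩, hsub, rfl⟩
      exact ⟨rfl, hsub, hKI⟩
    · rintro ⟨rfl, hsub, hKI⟩
      exact ⟨⟨hKI, interIn_le hsub⟩, hsub, rfl⟩

end MobiusSum

theorem stmt7 [Ring R] [Fintype R] (K J : Submodule R R) (hKJ : K ≤ J) :
    (K = J → ∑ᶠ I ∈ {I : Submodule R R | K ≤ I ∧ I ≤ J}, muR I J = 1) ∧
    (K < J → ∑ᶠ I ∈ {I : Submodule R R | K ≤ I ∧ I ≤ J}, muR I J = 0) := by
  let := Fintype.ofFinite (Submodule R R)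
  have hsum : ∑ᶠ I ∈ {I : Submodule R R | K ≤ I ∧ I ≤ J}, muR I J
      = if maxROfAbove J K = ∅ then 1 else 0 := by
    rw [← coe_filter_univ, finsum_mem_coe_finset, sum_muR_of_le hKJ]
  refine ⟨fun hK => ?_, fun hK => ?_⟩
  · rw [hsum, hK, if_pos (maxROfAbove_self J)]
  · rw [hsum, if_neg (maxROfAbove_nonempty hK).ne_empty]
end

section
/- Let R be a finite ring with unity and let I ⊊ J be left ideals of R. If I cannot be expressed as an intersection of some maximal R-left ideals of J (i.e., there is no nonempty subset E ⊆ M_R(J) with ⋂_{M∈E} M = I), then μ_R(K,J) = 0 for every left ideal K of R with K ⊆ I. -/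
/-
Write `L(x)` for the meet inside `J` of the maximal left ideals of `J` containing `x`. In any
modular lattice, if `x ≤ J` lies above a finite meet `M₀ ⊓ M₁ ⊓ ⋯ ⊓ Mₙ` of lower covers of
`J`, then `L(x) = x`. By induction on `n`: for `x ≤ M₀`, the induction hypothesis applied to
`x ⊔ M₁ ⊓ ⋯ ⊓ Mₙ` and modularity give the claim; for `x ≰ M₀`, the diamond isomorphism
`[x ⊓ M₀, M₀] ≅ [x, J]` reduces it to the first case applied to `x ⊓ M₀`. Hence if
`K ≤ I < J` and `K` is an intersection of maximal left ideals of `J`, so is `I`; so when `I`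
is not, no `K ≤ I` is either, and `μ_R(K, J) = 0` falls into the last case of its definition.
-/

open scoped BigOperators
open Classical

variable {R : Type*}

namespace Order

variable {α : Type*} [CompleteLattice α]

def lowerCoversInf (J x : α) : α := J ⊓ sInf {M | M ⋖ J ∧ x ≤ M}

lemma lowerCoversInf_le {J x : α} : lowerCoversInf J x ≤ J := inf_le_left

lemma le_lowerCoversInf {J x : α} (hx : x ≤ J) : x ≤ lowerCoversInf J x :=
  le_inf hx (le_sInf fun _ hM => hM.2)

lemma lowerCoversInf_le_of_covBy {J x M : α} (hM : M ⋖ J) (hxM : x ≤ M) :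
    lowerCoversInf J x ≤ M :=
  inf_le_of_right_le (sInf_le ⟨hM, hxM⟩)

lemma lowerCoversInf_mono {J x y : α} (hxy : x ≤ y) :
    lowerCoversInf J x ≤ lowerCoversInf J y :=
  inf_le_inf_left J (sInf_le_sInf fun _ hM => ⟨hM.1, hxy.trans hM.2⟩)

variable [IsModularLattice α]

lemma lowerCoversInf_le_of_le_covBy {J x e M₀ : α} (hM₀ : M₀ ⋖ J) (hxM₀ : x ≤ M₀)
    (he : M₀ ⊓ e ≤ x) (hsup : lowerCoversInf J (x ⊔ e) ≤ x ⊔ e) :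
    lowerCoversInf J x ≤ x :=
  calc lowerCoversInf J x ≤ (x ⊔ e) ⊓ M₀ :=
        le_inf ((lowerCoversInf_mono le_sup_left).trans hsup)
          (lowerCoversInf_le_of_covBy hM₀ hxM₀)
    _ = x ⊔ e ⊓ M₀ := sup_inf_assoc_of_le e hxM₀
    _ ≤ x := sup_le le_rfl (inf_comm e M₀ ▸ he)

/-- The diamond isomorphism `[x ⊓ M₀, M₀] ≅ [x, J]` sends lower covers of `J` to lower covers
of `J`. -/
lemma lowerCoversInf_inf_le {J x M₀ : α} (hM₀ : M₀ ⋖ J) (hxM₀ : x ⊔ M₀ = J) :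
    M₀ ⊓ lowerCoversInf J x ≤ lowerCoversInf J (x ⊓ M₀) := by
  refine le_inf (inf_le_of_right_le lowerCoversInf_le) (le_sInf ?_)
  rintro N ⟨hN, hxN⟩
  obtain rfl | hNM₀ := eq_or_ne N M₀
  · exact inf_le_left
  have hcov : N ⊓ M₀ ⋖ M₀ :=
    inf_covBy_of_covBy_sup_left ((hN.wcovBy.sup_eq hM₀.wcovBy hNM₀).symm ▸ hN)
  have hback : M₀ ⊓ (N ⊓ M₀ ⊔ x) = N ⊓ M₀ := by
    rw [inf_comm M₀, sup_inf_assoc_of_le x inf_le_right, sup_eq_left]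
    exact le_inf hxN inf_le_right
  have hcover : N ⊓ M₀ ⊔ x ⋖ J := by
    have := covBy_sup_of_inf_covBy_left (hback ▸ hcov)
    rwa [← sup_assoc, sup_eq_left.mpr (inf_le_right : N ⊓ M₀ ≤ M₀), sup_comm M₀, hxM₀] at this
  calc M₀ ⊓ lowerCoversInf J x ≤ M₀ ⊓ (N ⊓ M₀ ⊔ x) :=
        inf_le_inf_left M₀ (lowerCoversInf_le_of_covBy hcover le_sup_right)
    _ ≤ N := by rw [hback]; exact inf_le_left

theorem lowerCoversInf_le_of_inf_sInf_le {J : α} {E : Set α} (hE : E.Finite)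
    (hEJ : ∀ M ∈ E, M ⋖ J) {x : α} (hxJ : x ≤ J) (hEx : J ⊓ sInf E ≤ x) :
    lowerCoversInf J x ≤ x := by
  induction E, hE using Set.Finite.induction_on generalizing x with
  | empty => exact lowerCoversInf_le.trans (by simpa using hEx)
  | @insert M₀ E₀ _ _ ih =>
    have hM₀ : M₀ ⋖ J := hEJ M₀ (Set.mem_insert _ _)
    set e := J ⊓ sInf E₀
    have hM₀e : M₀ ⊓ e ≤ x := by
      rwa [sInf_insert, inf_left_comm] at hEx
    have below : ∀ y ≤ M₀, M₀ ⊓ e ≤ y → lowerCoversInf J y ≤ y := fun y hy hey =>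
      lowerCoversInf_le_of_le_covBy hM₀ hy hey
        (ih (fun M hM => hEJ M (Set.mem_insert_of_mem _ hM))
          (sup_le (hy.trans hM₀.le) inf_le_left) le_sup_right)
    by_cases hxM₀ : x ≤ M₀
    · exact below x hxM₀ hM₀e
    have hsup : x ⊔ M₀ = J :=
      (hM₀.eq_or_eq le_sup_right (sup_le hxJ hM₀.le)).resolve_left
        fun h => hxM₀ (h ▸ le_sup_left)
    calc lowerCoversInf J x = x ⊔ M₀ ⊓ lowerCoversInf J x := by
          rw [← sup_inf_assoc_of_le M₀ (le_lowerCoversInf hxJ), hsup,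
            inf_eq_right.mpr lowerCoversInf_le]
      _ ≤ x ⊔ lowerCoversInf J (x ⊓ M₀) := sup_le_sup_left (lowerCoversInf_inf_le hM₀ hsup) x
      _ ≤ x ⊔ x ⊓ M₀ := sup_le_sup_left (below _ inf_le_right (le_inf hM₀e inf_le_left)) x
      _ = x := sup_inf_self

end Order

lemma mem_maxROf_iff [Ring R] {J M : Submodule R R} : M ∈ maxROf J ↔ M ⋖ J := Iff.rfl

lemma exists_interIn_eq_of_interIn_le [Ring R] [Finite R] {I J K : Submodule R R}
    (hIJ : I < J) (hK : ∃ E ⊆ maxROf J, E.Nonempty ∧ interIn J E = K) (hKI : K ≤ I) :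
    ∃ E ⊆ maxROf J, E.Nonempty ∧ interIn J E = I := by
  obtain ⟨E, hEJ, hEne, rfl⟩ := hK
  rw [interIn, if_neg hEne.ne_empty] at hKI
  obtain ⟨M, hIM, hM⟩ := exists_le_covBy_of_lt hIJ
  have hE' : {M | M ⋖ J ∧ I ≤ M}.Nonempty := ⟨M, hM, hIM⟩
  refine ⟨{M | M ⋖ J ∧ I ≤ M}, fun M hM => mem_maxROf_iff.mpr hM.1, hE', ?_⟩
  rw [interIn, if_neg hE'.ne_empty]
  refine le_antisymm ?_ (le_sInf fun _ hM => hM.2)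
  calc sInf {M | M ⋖ J ∧ I ≤ M} = Order.lowerCoversInf J I :=
        (inf_eq_right.mpr ((sInf_le hE'.some_mem).trans hE'.some_mem.1.le)).symm
    _ ≤ I := Order.lowerCoversInf_le_of_inf_sInf_le E.toFinite
        (fun M hM => mem_maxROf_iff.mp (hEJ hM)) hIJ.le (inf_le_right.trans hKI)

theorem stmt10 [Ring R] [Fintype R] (I J : Submodule R R) (hIJ : I < J)
    (h : ¬ ∃ E : Set (Submodule R R), E ⊆ maxROf J ∧ E.Nonempty ∧ interIn J E = I) :
    ∀ K : Submodule R R, K ≤ I → muR K J = 0 := by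
  intro K hKI
  have hKJ : K < J := lt_of_le_of_lt hKI hIJ
  rw [muR, if_neg hKJ.ne, if_neg fun hK => h (exists_interIn_eq_of_interIn_le hIJ hK.2 hKI)]
end
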